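/- Every ultrametric is a fixed point of the single-linkage operation: if (X,u) is a finite ultrametric space and x₁ ≠ x₂ ∈ X, then max over subsets A ⊆ X with x₁ ∈ A, x₂ ∉ A of min{u(y₁,y₂) : y₁ ∈ A, y₂ ∉ A} equals u(x₁,x₂). -/

import Mathlib

def IsWeight {X : Type*} (u : X → X → ℝ) : Prop :=
  (∀ x y, 0 ≤ u x y) ∧ (∀ x y, u x y = u y x) ∧ (∀ x, u x x = 0)

/-- The minimal `u`-distance across the bipartition `{A, Aᶜ}`. -/
noncomputable def crossDist {X : Type*} (u : X → X → ℝ) (A : Set X) : ℝ :=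
  sInf {s : ℝ | ∃ y₁ ∈ A, ∃ y₂ ∉ A, s = u y₁ y₂}

/-- The single-linkage weight: the maximal, over bipartitions separating
`x₁` from `x₂`, minimal cross-distance; `0` on the diagonal. -/
noncomputable def Ebi {X : Type*} [DecidableEq X] (u : X → X → ℝ) (x₁ x₂ : X) : ℝ :=
  if x₁ = x₂ then 0
  else sSup {r : ℝ | ∃ A : Set X, x₁ ∈ A ∧ x₂ ∉ A ∧ r = crossDist u A}

def IsUltrametric {X : Type*} (u : X → X → ℝ) : Prop :=
  IsWeight u ∧ ∀ x y z, u x z ≤ max (u x y) (u y z)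

/-!
Any bipartition separating `x₁` from `x₂` has the pair `(x₁, x₂)` among its crossing pairs, so its
cross-distance is at most `u x₁ x₂`. Conversely, for an ultrametric the open ball
`{y | u x₁ y < u x₁ x₂}` is a union of classes of the equivalence relation `u y₁ y₂ < u x₁ x₂`,
so every pair leaving it is at distance at least `u x₁ x₂`; it contains `x₁` but not `x₂`
(when `u x₁ x₂ = 0` the singleton `{x₁}` does the job instead).
-/

section

variable {X : Type*} {u : X → X → ℝ}

lemma crossDist_nonneg (hnn : ∀ x y, 0 ≤ u x y) (A : Set X) : 0 ≤ crossDist u A :=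
  Real.sInf_nonneg (by rintro _ ⟨y₁, -, y₂, -, rfl⟩; exact hnn y₁ y₂)

lemma crossDist_le (hnn : ∀ x y, 0 ≤ u x y) {A : Set X} {x₁ x₂ : X} (h₁ : x₁ ∈ A)
    (h₂ : x₂ ∉ A) : crossDist u A ≤ u x₁ x₂ :=
  csInf_le ⟨0, by rintro _ ⟨y₁, -, y₂, -, rfl⟩; exact hnn y₁ y₂⟩ ⟨x₁, h₁, x₂, h₂, rfl⟩

lemma le_crossDist {A : Set X} {c : ℝ} (hA : A.Nonempty) (hAc : Aᶜ.Nonempty)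
    (h : ∀ y₁ ∈ A, ∀ y₂ ∉ A, c ≤ u y₁ y₂) : c ≤ crossDist u A := by
  obtain ⟨y₁, hy₁⟩ := hA
  obtain ⟨y₂, hy₂⟩ := hAc
  refine le_csInf ⟨_, y₁, hy₁, y₂, hy₂, rfl⟩ ?_
  rintro _ ⟨z₁, hz₁, z₂, hz₂, rfl⟩
  exact h z₁ hz₁ z₂ hz₂

lemma Ebi_eq_of_forall_crossDist_le [DecidableEq X] {x₁ x₂ : X} {c : ℝ} (hne : x₁ ≠ x₂)
    (hle : ∀ A : Set X, x₁ ∈ A → x₂ ∉ A → crossDist u A ≤ c)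
    (hge : ∃ A : Set X, x₁ ∈ A ∧ x₂ ∉ A ∧ c ≤ crossDist u A) :
    Ebi u x₁ x₂ = c := by
  obtain ⟨A₀, h₁, h₂, hc⟩ := hge
  rw [Ebi, if_neg hne]
  apply le_antisymm
  · refine csSup_le ⟨_, A₀, h₁, h₂, rfl⟩ ?_
    rintro _ ⟨A, hA₁, hA₂, rfl⟩
    exact hle A hA₁ hA₂
  · refine le_csSup_of_le ?_ ⟨A₀, h₁, h₂, rfl⟩ hc
    exact ⟨c, by rintro _ ⟨A, hA₁, hA₂, rfl⟩; exact hle A hA₁ hA₂⟩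

lemma IsUltrametric.le_of_lt_of_le (hu : IsUltrametric u) {x y₁ y₂ : X} {r : ℝ}
    (h₁ : u x y₁ < r) (h₂ : r ≤ u x y₂) : r ≤ u y₁ y₂ :=
  le_of_not_gt fun h => ((hu.2 x y₁ y₂).trans_lt (max_lt h₁ h)).not_ge h₂

lemma IsUltrametric.exists_separating_le_crossDist (hu : IsUltrametric u) {x₁ x₂ : X}
    (hne : x₁ ≠ x₂) : ∃ A : Set X, x₁ ∈ A ∧ x₂ ∉ A ∧ u x₁ x₂ ≤ crossDist u A := by
  obtain ⟨⟨hnn, -, hdiag⟩, -⟩ := id hu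
  rcases (hnn x₁ x₂).eq_or_lt with hzero | hpos
  · exact ⟨{x₁}, rfl, fun h => hne h.symm, hzero ▸ crossDist_nonneg hnn _⟩
  · have h₁ : x₁ ∈ {y | u x₁ y < u x₁ x₂} := by simpa [hdiag] using hpos
    have h₂ : x₂ ∉ {y | u x₁ y < u x₁ x₂} := (lt_irrefl (u x₁ x₂) ·)
    refine ⟨_, h₁, h₂, le_crossDist ⟨x₁, h₁⟩ ⟨x₂, h₂⟩ fun y₁ hy₁ y₂ hy₂ => ?_⟩
    exact hu.le_of_lt_of_le hy₁ (not_lt.1 hy₂)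

end

theorem Ebi_fixes_ultrametrics_general {X : Type*} [DecidableEq X]
    (u : X → X → ℝ) (hu : IsUltrametric u) (x₁ x₂ : X) (hne : x₁ ≠ x₂) :
    Ebi u x₁ x₂ = u x₁ x₂ :=
  Ebi_eq_of_forall_crossDist_le hne (fun _ h₁ h₂ => crossDist_le hu.1.1 h₁ h₂)
    (hu.exists_separating_le_crossDist hne)

theorem Ebi_fixes_ultrametrics {X : Type*} [Fintype X] [DecidableEq X]
    (u : X → X → ℝ) (hu : IsUltrametric u) (x₁ x₂ : X) (hne : x₁ ≠ x₂) :
    Ebi u x₁ x₂ = u x₁ x₂ :=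
  Ebi_fixes_ultrametrics_general u hu x₁ x₂ hne
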